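/- Let ω, c > 0 and let E₀ : ℝ³ → ℂ³ be a bounded smooth vector field. Then the following are equivalent: (i) there exists a function χ : ℝ³ → ℂ such that E₀(x − a) = χ(a)·E₀(x) for all x, a ∈ ℝ³, and E₀ satisfies the Helmholtz equation ΔE₀ = −(ω/c)² E₀ componentwise together with div E₀ = 0; (ii) there exist k₀ ∈ ℝ³ with |k₀| = ω/c and n ∈ ℂ³ with k₀ · n = 0 such that E₀(x) = n e^{i k₀·x} for all x ∈ ℝ³. (Plane waves are exactly the solutions of the design equations for the full translation group.) -/

import Mathlib

noncomputable section

open Real MeasureTheory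

abbrev V3 : Type := Fin 3 → ℝ
abbrev C3 : Type := Fin 3 → ℂ

/-- Partial derivative of a scalar field in the `i`-th coordinate direction. -/
def pd (i : Fin 3) (f : V3 → ℂ) (x : V3) : ℂ := fderiv ℝ f x (Pi.single i 1)

/-- Componentwise Laplacian of a scalar field. -/
def lap (f : V3 → ℂ) (x : V3) : ℂ := ∑ i, pd i (pd i f) x

def Lk (k : V3) : V3 →L[ℝ] ℂ :=
  Complex.ofRealCLM.comp (∑ j, k j • ContinuousLinearMap.proj j)

lemma Lk_apply (k x : V3) : Lk k x = ((∑ j, k j * x j : ℝ) : ℂ) := by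
  simp [Lk]

lemma Lk_single (k : V3) (i : Fin 3) : Lk k (Pi.single i 1) = (k i : ℂ) := by
  rw [Lk_apply]
  norm_cast
  simp [Pi.single_apply, mul_ite]

def phase (k x : V3) : ℂ := Complex.exp (Complex.I * ((∑ j, k j * x j : ℝ) : ℂ))

lemma phase_eq (k x : V3) : phase k x = Complex.exp (Complex.I * Lk k x) := by
  rw [phase, Lk_apply]

lemma hasFDerivAt_phase (k x : V3) :
    HasFDerivAt (phase k) ((Complex.I * phase k x) • Lk k) x := by
  have h1 : HasFDerivAt (fun y => Complex.I * Lk k y) (Complex.I • Lk k) x := by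
    exact (Lk k).hasFDerivAt.const_smul (Complex.I)
  have h2 := (Complex.hasDerivAt_exp (Complex.I * Lk k x)).comp_hasFDerivAt x h1
  have : (fun y => Complex.exp (Complex.I * Lk k y)) = phase k := by
    funext y; rw [phase_eq]
  rw [← this]
  have h3 : (Complex.I * Complex.exp (Complex.I * Lk k x)) • Lk k
      = Complex.exp (Complex.I * Lk k x) • Complex.I • Lk k := by
    rw [smul_smul, mul_comm]
  beta_reduce
  rw [h3]
  exact h2

lemma hasFDerivAt_const_phase (c : ℂ) (k : V3) (x : V3) :
    HasFDerivAt (fun y => c * phase k y) ((c * (Complex.I * phase k x)) • Lk k) x := by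
  have := (hasFDerivAt_phase k x).const_mul c
  rwa [smul_smul] at this

lemma pd_const_phase (c : ℂ) (k : V3) (i : Fin 3) (x : V3) :
    pd i (fun y => c * phase k y) x = (c * (Complex.I * (k i : ℂ))) * phase k x := by
  rw [pd, (hasFDerivAt_const_phase c k x).fderiv]
  rw [ContinuousLinearMap.smul_apply, Lk_single, smul_eq_mul]
  ring

lemma lap_const_phase (c : ℂ) (k : V3) (x : V3) :
    lap (fun y => c * phase k y) x = (-(∑ j, ((k j : ℂ))^2)) * (c * phase k x) := by
  unfold lap
  have h1 : ∀ i : Fin 3, pd i (pd i (fun y => c * phase k y)) x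
      = (-((k i : ℂ)^2)) * (c * phase k x) := by
    intro i
    have h2 : pd i (fun y => c * phase k y) = fun y => (c * (Complex.I * (k i : ℂ))) * phase k y := by
      funext y; exact pd_const_phase c k i y
    rw [h2, pd_const_phase]
    have := Complex.I_mul_I
    calc (c * (Complex.I * (k i:ℂ)) * (Complex.I * (k i:ℂ))) * phase k x
        = (Complex.I * Complex.I) * ((k i:ℂ)^2 * (c * phase k x)) := by ring
      _ = (-((k i : ℂ)^2)) * (c * phase k x) := by rw [Complex.I_mul_I]; ring
  rw [Finset.sum_congr rfl (fun i _ => h1 i), ← Finset.sum_mul, ← Finset.sum_neg_distrib]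

lemma phase_zero (k : V3) : phase k 0 = 1 := by
  simp [phase]

lemma hom_deriv (f : ℝ → ℂ) (hf : Differentiable ℝ f)
    (hmul : ∀ s t, f (s + t) = f s * f t) (t : ℝ) :
    HasDerivAt f (f t * deriv f 0) t := by
  have h1 : (fun s : ℝ => f (t + s)) = fun s => f t * f s := funext (hmul t)
  have h2 : HasDerivAt (fun s : ℝ => f (t + s)) (deriv f (t + 0)) 0 := by
    exact HasDerivAt.comp_const_add t 0 (hf (t + 0)).hasDerivAt
  have h3 : HasDerivAt (fun s : ℝ => f t * f s) (f t * deriv f 0) 0 :=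
    ((hf 0).hasDerivAt).const_mul (f t)
  rw [h1] at h2
  have h4 : deriv f (t + 0) = f t * deriv f 0 := h2.unique h3
  simpa [h4] using (hf t).hasDerivAt.congr_deriv (by rw [← h4]; simp)

lemma hom_eq_exp (f : ℝ → ℂ) (hf : Differentiable ℝ f) (h0 : f 0 = 1)
    (hmul : ∀ s t, f (s + t) = f s * f t) (t : ℝ) :
    f t = Complex.exp (deriv f 0 * t) := by
  set a := deriv f 0 with ha
  set g : ℝ → ℂ := fun t => f t * Complex.exp (-(a * t)) with hg
  have hgd : ∀ s : ℝ, HasDerivAt g 0 s := by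
    intro s
    have h1 : HasDerivAt (fun u : ℝ => -(a * (u:ℂ))) (-a) s := by
      have : HasDerivAt (fun u : ℝ => ((u:ℝ):ℂ)) 1 s := by
        simpa using (hasDerivAt_id s).ofReal_comp
      have h := (this.const_mul a).neg
      simp only [mul_one] at h
      exact h
    have h2 : HasDerivAt (fun u : ℝ => Complex.exp (-(a * u)))
        (Complex.exp (-(a * s)) * (-a)) s := h1.cexp
    have h3 := (hom_deriv f hf hmul s).mul h2
    refine h3.congr_deriv ?_
    rw [← ha]; ring
  have hconst : g t = g 0 := by
    have hgdiff : Differentiable ℝ g := fun s => (hgd s).differentiableAt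
    have hgz : ∀ s : ℝ, deriv g s = 0 := fun s => (hgd s).deriv
    exact is_const_of_deriv_eq_zero hgdiff hgz t 0
  have hg0 : g 0 = 1 := by simp [hg, h0]
  have : f t * Complex.exp (-(a * t)) = 1 := hconst.trans hg0
  have hKey := congrArg (· * Complex.exp (a * t)) this
  simpa [mul_assoc, ← Complex.exp_add] using hKey

lemma re_eq_zero_of_bounded (a : ℂ) (M : ℝ)
    (h : ∀ t : ℝ, ‖Complex.exp (a * t)‖ ≤ M) : a.re = 0 := by
  by_contra hre
  have key : ∀ t : ℝ, Real.exp (a.re * t) ≤ M := by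
    intro t
    have h1 := h t
    rw [Complex.norm_exp] at h1
    have : (a * (t:ℂ)).re = a.re * t := by simp [Complex.mul_re]
    rwa [this] at h1
  have hM1 : (1:ℝ) ≤ M := by simpa using key 0
  set t := Real.log (M+1) / a.re with ht
  have h2 : a.re * t = Real.log (M+1) := by
    rw [ht]; field_simp
  have h3 : Real.exp (a.re * t) = M + 1 := by
    rw [h2, Real.exp_log (by linarith)]
  have := key t
  rw [h3] at this
  linarith

lemma hom_is_phase (ψ : V3 → ℂ) (hsm : Differentiable ℝ ψ) (h0 : ψ 0 = 1)
    (hmul : ∀ a b : V3, ψ (a + b) = ψ a * ψ b) (M : ℝ)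
    (hb : ∀ x, ‖ψ x‖ ≤ M) :
    ∃ k : V3, ∀ x, ψ x = phase k x := by
  set sing : Fin 3 → ℝ → V3 := fun j t => Pi.single j t with hsing
  have hf : ∀ j : Fin 3, Differentiable ℝ (fun t : ℝ => ψ (sing j t)) := by
    intro j
    exact hsm.comp ((contDiff_single (ι := Fin 3) (F' := fun _ => ℝ) ⊤ j).differentiable (by simp))
  have hf0 : ∀ j : Fin 3, ψ (sing j 0) = 1 := by
    intro j; simp [hsing, h0]
  have hfmul : ∀ (j : Fin 3) (s t : ℝ), ψ (sing j (s+t)) = ψ (sing j s) * ψ (sing j t) := by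
    intro j s t
    rw [hsing]
    simp only
    rw [Pi.single_add]
    exact hmul _ _
  set cc : Fin 3 → ℂ := fun j => deriv (fun t : ℝ => ψ (sing j t)) 0 with hcc
  have hexp : ∀ (j : Fin 3) (t : ℝ), ψ (sing j t) = Complex.exp (cc j * t) := by
    intro j t
    exact hom_eq_exp _ (hf j) (hf0 j) (hfmul j) t
  have hre : ∀ j : Fin 3, (cc j).re = 0 := by
    intro j
    refine re_eq_zero_of_bounded (cc j) M (fun t => ?_)
    rw [← hexp j t]; exact hb _
  refine ⟨fun j => (cc j).im, fun x => ?_⟩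
  have hdecomp : x = sing 0 (x 0) + sing 1 (x 1) + sing 2 (x 2) := by
    funext j
    fin_cases j <;> simp [hsing, Pi.single_apply]
  have hx : ψ x = Complex.exp (cc 0 * x 0 + cc 1 * x 1 + cc 2 * x 2) := by
    conv_lhs => rw [hdecomp]
    rw [hmul, hmul, hexp, hexp, hexp, ← Complex.exp_add, ← Complex.exp_add]
  rw [hx, phase]
  congr 1
  rw [Fin.sum_univ_three]
  have hc : ∀ j : Fin 3, cc j = Complex.I * ((cc j).im : ℂ) := by
    intro j
    apply Complex.ext <;> simp [hre j]
  push_cast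
  conv_lhs => rw [hc 0, hc 1, hc 2]
  ring

/-- **Plane waves are right for crystals.**
For a bounded smooth field `E : ℝ³ → ℂ³`, being a joint eigenfunction of all
translations together with the time-harmonic Maxwell equations (Helmholtz with
frequency ω and zero divergence) is equivalent to being a plane wave
`n e^{i k₀·x}` with `|k₀| = ω/c` and `k₀ · n = 0`. -/
theorem planeWaves_solve_design_equations
    (ω c : ℝ) (hω : 0 < ω) (hc : 0 < c) (E : V3 → C3)
    (hbdd : ∃ M : ℝ, ∀ (x : V3) (i : Fin 3), ‖E x i‖ ≤ M)
    (hsmooth : ∀ i : Fin 3, ContDiff ℝ (⊤ : ℕ∞) fun x => E x i) :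
    ((∃ χ : V3 → ℂ, ∀ x a : V3, E (x - a) = fun i => χ a * E x i) ∧
      (∀ (x : V3) (i : Fin 3), lap (fun y => E y i) x = -(((ω/c)^2 : ℝ) : ℂ) * E x i) ∧
      (∀ x : V3, ∑ i, pd i (fun y => E y i) x = 0)) ↔
    (∃ (k₀ : V3) (n : C3),
      Real.sqrt (∑ i, k₀ i ^ 2) = ω / c ∧
      (∑ i, (k₀ i : ℂ) * n i) = 0 ∧
      ∀ x : V3, E x = fun i => n i * Complex.exp (Complex.I * ((∑ j, k₀ j * x j : ℝ) : ℂ))) := by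
  have hωc : 0 < ω / c := div_pos hω hc
  constructor
  · rintro ⟨⟨χ, hχ⟩, hlap, hdiv⟩
    obtain ⟨M, hM⟩ := hbdd
    by_cases hz : ∀ (x : V3) (i : Fin 3), E x i = 0
    · refine ⟨![ω / c, 0, 0], fun _ => 0, ?_, by simp, ?_⟩
      · rw [Fin.sum_univ_three]
        norm_num
        have h2 : (![ω / c, 0, 0] : V3) 2 = 0 := rfl
        rw [h2]; norm_num
        exact Real.sqrt_sq hωc.le
      · intro x; funext i; simp [hz]
    · push_neg at hz
      obtain ⟨x₀, i₀, hx₀⟩ := hz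
      have hχmul : ∀ a b : V3, χ (a + b) = χ a * χ b := by
        intro a b
        have h1 := congrFun (hχ x₀ (a + b)) i₀
        have h2 := congrFun (hχ (x₀ - a) b) i₀
        have h3 := congrFun (hχ x₀ a) i₀
        have h4 : x₀ - (a + b) = x₀ - a - b := by rw [sub_sub]
        rw [h4, h2, h3] at h1
        rcases mul_eq_mul_right_iff.1 (by linear_combination -h1 :
            χ (a + b) * E x₀ i₀ = (χ b * χ a) * E x₀ i₀) with h | h
        · rw [h]; ring
        · exact absurd h hx₀
      have hEψ : ∀ (y : V3) (i : Fin 3), E y i = χ (-y) * E 0 i := by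
        intro y i
        have := congrFun (hχ 0 (-y)) i
        simpa using this
      set ψ : V3 → ℂ := fun y => χ (-y) with hψdef
      have hψmul : ∀ a b : V3, ψ (a + b) = ψ a * ψ b := by
        intro a b
        simp only [hψdef, neg_add]
        rw [hχmul]
      have hE0 : E 0 i₀ ≠ 0 := by
        intro h
        apply hx₀
        rw [hEψ x₀ i₀, h, mul_zero]
      have hψ0 : ψ 0 = 1 := by
        have := hEψ 0 i₀
        simp only [hψdef, neg_zero] at this ⊢
        exact mul_right_cancel₀ hE0 (by rw [← this, one_mul])
      have hψ_eq : ψ = fun y => E y i₀ * (E 0 i₀)⁻¹ := by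
        funext y
        rw [hEψ y i₀]
        field_simp
        rfl
      have hψdiff : Differentiable ℝ ψ := by
        rw [hψ_eq]
        exact ((hsmooth i₀).differentiable (by simp)).mul_const _
      have hψbdd : ∀ x, ‖ψ x‖ ≤ M * (‖E 0 i₀‖)⁻¹ := by
        intro x
        rw [hψ_eq]
        simp only [norm_mul, norm_inv]
        exact mul_le_mul_of_nonneg_right (hM x i₀) (by positivity)
      obtain ⟨k, hk⟩ := hom_is_phase ψ hψdiff hψ0 hψmul _ hψbdd
      have hE' : ∀ (y : V3) (i : Fin 3), E y i = E 0 i * phase k y := by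
        intro y i
        rw [hEψ y i, ← hk y]
        show ψ y * E 0 i = E 0 i * ψ y
        ring
      have hsum : (∑ j, ((k j : ℂ))^2) = (((ω/c)^2 : ℝ) : ℂ) := by
        have h1 := hlap 0 i₀
        have h2 : (fun y => E y i₀) = fun y => E 0 i₀ * phase k y :=
          funext fun y => hE' y i₀
        rw [h2, lap_const_phase, phase_zero, mul_one] at h1
        have h1' : (-(∑ j, ((k j : ℂ))^2)) * E 0 i₀ = (-(((ω/c)^2 : ℝ) : ℂ)) * E 0 i₀ := h1
        have := mul_right_cancel₀ hE0 h1'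
        exact neg_injective this
      refine ⟨k, E 0, ?_, ?_, fun x => funext fun i => hE' x i⟩
      · have hreal : (∑ j, k j ^ 2) = (ω/c)^2 := by
          have : (((∑ j, k j ^ 2 : ℝ)) : ℂ) = (((ω/c)^2 : ℝ) : ℂ) := by
            rw [← hsum]; push_cast; ring
          exact_mod_cast this
        rw [hreal, Real.sqrt_sq hωc.le]
      · have h1 := hdiv 0
        have h2 : ∀ i : Fin 3, pd i (fun y => E y i) 0 = E 0 i * (Complex.I * (k i : ℂ)) := by
          intro i
          have h3 : (fun y => E y i) = fun y => E 0 i * phase k y :=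
            funext fun y => hE' y i
          rw [h3, pd_const_phase, phase_zero, mul_one]
        rw [Finset.sum_congr rfl (fun i _ => h2 i)] at h1
        have h4 : (∑ i, E 0 i * (Complex.I * (k i : ℂ)))
            = Complex.I * ∑ i, (k i : ℂ) * E 0 i := by
          rw [Finset.mul_sum]
          exact Finset.sum_congr rfl (fun i _ => by ring)
        rw [h4, mul_eq_zero] at h1
        rcases h1 with h | h
        · exact absurd h Complex.I_ne_zero
        · exact h
  · rintro ⟨k₀, n, hknorm, hkn, hE⟩
    have hEi : ∀ (x : V3) (i : Fin 3), E x i = n i * phase k₀ x := by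
      intro x i; rw [hE x]; rfl
    have hcomp : ∀ i : Fin 3, (fun y => E y i) = fun y => n i * phase k₀ y :=
      fun i => funext fun y => hEi y i
    have hS : (∑ j, k₀ j ^ 2) = (ω/c)^2 := by
      have h0 : (0:ℝ) ≤ ∑ j, k₀ j ^ 2 := Finset.sum_nonneg fun j _ => sq_nonneg _
      rw [← Real.sq_sqrt h0, hknorm]
    refine ⟨?_, ?_, ?_⟩
    · refine ⟨fun a => Complex.exp (-(Complex.I * ((∑ j, k₀ j * a j : ℝ) : ℂ))), ?_⟩
      intro x a
      funext i
      rw [hEi (x - a) i, hEi x i]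
      have hphase : phase k₀ (x - a)
          = Complex.exp (-(Complex.I * ((∑ j, k₀ j * a j : ℝ) : ℂ))) * phase k₀ x := by
        rw [phase, phase, ← Complex.exp_add]
        congr 1
        have hsub : (∑ j, k₀ j * (x - a) j) = (∑ j, k₀ j * x j) - (∑ j, k₀ j * a j) := by
          rw [← Finset.sum_sub_distrib]
          exact Finset.sum_congr rfl fun j _ => by simp [mul_sub]
        rw [hsub]
        push_cast
        ring
      rw [hphase]; ring
    · intro x i
      rw [hcomp i, lap_const_phase, hEi x i]
      have hcast : (∑ j, ((k₀ j : ℂ))^2) = (((ω/c)^2 : ℝ) : ℂ) := by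
        rw [← hS]; push_cast; ring
      rw [hcast]
    · intro x
      have h2 : ∀ i : Fin 3, pd i (fun y => E y i) x
          = (n i * (Complex.I * (k₀ i : ℂ))) * phase k₀ x := by
        intro i
        rw [hcomp i, pd_const_phase]
      rw [Finset.sum_congr rfl (fun i _ => h2 i), ← Finset.sum_mul]
      have h3 : (∑ i, n i * (Complex.I * (k₀ i : ℂ)))
          = Complex.I * ∑ i, (k₀ i : ℂ) * n i := by
        rw [Finset.mul_sum]
        exact Finset.sum_congr rfl fun i _ => by ring
      rw [h3, hkn, mul_zero, zero_mul]
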